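/- Let m ≥ 3 be odd and a, b : F_2^{m-1} → F_2 bent functions. Define f : F_2^{m-1} × F_2 → Z_4 by f(x,y) = 2a(x)(1+y) + 2b(x)y + y, where the bit y and the values a(x), b(x) are lifted to {0,1} ⊂ Z_4. Then f is a generalized bent function: for every v ∈ F_2^m, |Σ_{z ∈ F_2^m} i^{f(z)} (-1)^{⟨v,z⟩}| = 2^{m/2}. -/

import Mathlib

open Finset

def walsh {n : ℕ} (f : (Fin n → ZMod 2) → ZMod 2) (v : Fin n → ZMod 2) : ℤ :=
  ∑ x : Fin n → ZMod 2, (-1 : ℤ) ^ (f x + ∑ i : Fin n, v i * x i).val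

def IsBent {n : ℕ} (f : (Fin n → ZMod 2) → ZMod 2) : Prop :=
  ∀ v, walsh f v = 2 ^ (n / 2) ∨ walsh f v = -(2 ^ (n / 2))

/-- the gbent construction `f(x,y) = 2a(x)(1+y) + 2b(x)y + y` with values in `Z_4` -/
def gfun {m : ℕ} (a b : (Fin (m - 1) → ZMod 2) → ZMod 2)
    (z : (Fin (m - 1) → ZMod 2) × ZMod 2) : ZMod 4 :=
  2 * ((a z.1).val : ZMod 4) * (1 + ((z.2).val : ZMod 4)) +
    2 * ((b z.1).val : ZMod 4) * ((z.2).val : ZMod 4) + ((z.2).val : ZMod 4)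

/-- dot product on `F_2^{m-1} × F_2` -/
def dotp {m : ℕ} (v z : (Fin (m - 1) → ZMod 2) × ZMod 2) : ZMod 2 :=
  (∑ i : Fin (m - 1), v.1 i * z.1 i) + v.2 * z.2

/-! Splitting the sum over the last bit `y`: since `i ^ (2c) = (-1) ^ c`, the `y = 0` half is
`W_a(v₁)` and the `y = 1` half is `i (-1)^{v₂} W_b(v₁)`. The transform is thus `A + iB` with
`A² = B² = 2^(m-1)`, of modulus `2^(m/2)`. -/

lemma neg_one_pow_val_add {R : Type*} [Ring R] (s t : ZMod 2) :
    (-1 : R) ^ (s + t).val = (-1) ^ s.val * (-1) ^ t.val := by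
  rw [ZMod.val_add, ← neg_one_pow_eq_pow_mod_two, pow_add]

theorem IsBent.walsh_sq {n : ℕ} {f : (Fin n → ZMod 2) → ZMod 2} (hf : IsBent f) (hn : Even n)
    (v : Fin n → ZMod 2) : walsh f v ^ 2 = 2 ^ n := by
  have hn2 : n / 2 * 2 = n := Nat.div_two_mul_two_of_even hn
  rcases hf v with h | h <;> rw [h, ← hn2] <;> simp [← pow_mul]

lemma Complex.norm_intCast_add_I_mul_neg_one_pow_mul (x y : ℤ) (n : ℕ) :
    ‖(x : ℂ) + I * (-1) ^ n * y‖ = √((x ^ 2 + y ^ 2 : ℤ) : ℝ) := by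
  have h : (x : ℂ) + I * (-1) ^ n * y = (x : ℝ) + ((-1) ^ n * y : ℝ) * I := by push_cast; ring
  rw [h, norm_add_mul_I, mul_pow, ← pow_mul, mul_comm n, pow_mul]
  norm_num

lemma ZMod.sum_univ_two {M : Type*} [AddCommMonoid M] (g : ZMod 2 → M) :
    ∑ y, g y = g 0 + g 1 :=
  Fin.sum_univ_two g

section gfun

variable {m : ℕ} (a b : (Fin (m - 1) → ZMod 2) → ZMod 2) (x : Fin (m - 1) → ZMod 2)

lemma val_gfun_zero : (gfun a b (x, 0)).val = 2 * (a x).val := by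
  dsimp only [gfun]
  generalize a x = c, b x = d
  revert c d
  decide

lemma val_gfun_one : (gfun a b (x, 1)).val = 2 * (b x).val + 1 := by
  dsimp only [gfun]
  generalize a x = c, b x = d
  revert c d
  decide

lemma I_pow_gfun_zero : Complex.I ^ (gfun a b (x, 0)).val = (-1) ^ (a x).val := by
  rw [val_gfun_zero, pow_mul, Complex.I_sq]

lemma I_pow_gfun_one : Complex.I ^ (gfun a b (x, 1)).val = Complex.I * (-1) ^ (b x).val := by
  rw [val_gfun_one, pow_succ, pow_mul, Complex.I_sq, mul_comm]

lemma sum_I_pow_gfun_mul_neg_one_pow_dotp_fiber (v : (Fin (m - 1) → ZMod 2) × ZMod 2) :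
    ∑ y, Complex.I ^ (gfun a b (x, y)).val * (-1 : ℂ) ^ (dotp v (x, y)).val =
      (-1) ^ (a x + ∑ i, v.1 i * x i).val +
        Complex.I * (-1) ^ v.2.val * (-1) ^ (b x + ∑ i, v.1 i * x i).val := by
  simp only [ZMod.sum_univ_two, I_pow_gfun_zero, I_pow_gfun_one, dotp, mul_zero, mul_one,
    neg_one_pow_val_add, ZMod.val_zero, pow_zero]
  ring

theorem sum_I_pow_gfun_mul_neg_one_pow_dotp (v : (Fin (m - 1) → ZMod 2) × ZMod 2) :
    ∑ z, Complex.I ^ (gfun a b z).val * (-1 : ℂ) ^ (dotp v z).val =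
      (walsh a v.1 : ℂ) + Complex.I * (-1) ^ v.2.val * walsh b v.1 := by
  simp only [Fintype.sum_prod_type, sum_I_pow_gfun_mul_neg_one_pow_dotp_fiber, walsh]
  push_cast
  rw [sum_add_distrib, mul_sum]

end gfun

theorem gbent_of_bent_pair_general {m : ℕ} (hm : Odd m)
    (a b : (Fin (m - 1) → ZMod 2) → ZMod 2) (ha : IsBent a) (hb : IsBent b) :
    ∀ v : (Fin (m - 1) → ZMod 2) × ZMod 2,
      ‖∑ z : (Fin (m - 1) → ZMod 2) × ZMod 2,
          Complex.I ^ (gfun a b z).val * (-1 : ℂ) ^ (dotp v z).val‖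
        = Real.sqrt (2 ^ m) := by
  intro v
  have he : Even (m - 1) := Nat.Odd.sub_odd hm odd_one
  rw [sum_I_pow_gfun_mul_neg_one_pow_dotp, Complex.norm_intCast_add_I_mul_neg_one_pow_mul,
    ha.walsh_sq he, hb.walsh_sq he, ← two_mul, ← pow_succ', Nat.sub_add_cancel hm.pos]
  norm_num

theorem gbent_of_bent_pair {m : ℕ} (hm : Odd m) (hm3 : 3 ≤ m)
    (a b : (Fin (m - 1) → ZMod 2) → ZMod 2) (ha : IsBent a) (hb : IsBent b) :
    ∀ v : (Fin (m - 1) → ZMod 2) × ZMod 2,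
      ‖∑ z : (Fin (m - 1) → ZMod 2) × ZMod 2,
          Complex.I ^ (gfun a b z).val * (-1 : ℂ) ^ (dotp v z).val‖
        = Real.sqrt (2 ^ m) :=
  gbent_of_bent_pair_general hm a b ha hb
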